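/- arXiv:2308.05958 — 4 statements merged into one kernel-verified Lean document; each statement's English description precedes it below -/
import Mathlib

section
/- Let d ≥ 1 and m ≥ 1 be integers, let s_1, …, s_m ∈ ℝ^d, let b_1, …, b_m ∈ ℝ^d, let r > 0 and δ > 0 be such that |s_j − s_l| ≥ δ for all j ≠ l. Define the m × m complex matrix A by a_{l,j} = exp((r s_l + b_l i)·s_j) = exp(r s_l·s_j + i b_l·s_j), and set p_j = exp((r/2)|s_j|²). Then for every j ∈ {1,…,m}: |a_{j,j}| − p_j ∑_{l ≠ j} |a_{l,j}| / p_l = exp(r|s_j|²) (1 − ∑_{l ≠ j} exp(−r|s_j − s_l|²/2)) ≥ exp(r|s_j|²) (1 − (m−1) exp(−r δ²/2)). -/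
/-!
Since the imaginary part of the exponent does not affect the modulus, `|a_{l,j}| = exp (r ⟪s_l, s_j⟫)`,
and completing the square, `‖s_j‖² - ‖s_j - s_l‖² / 2 = ⟪s_l, s_j⟫ - ‖s_l‖² / 2 + ‖s_j‖² / 2`,
turns each weighted off-diagonal term into `exp (r ‖s_j‖²) exp (-r ‖s_j - s_l‖² / 2)`.
The separation `δ ≤ ‖s_j - s_l‖` bounds each of the `m - 1` Gaussian factors by `exp (-r δ² / 2)`.
-/

open Finset

theorem Complex.norm_exp_ofReal_add_I_mul (x y : ℝ) :
    ‖Complex.exp (x + Complex.I * y)‖ = Real.exp x := by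
  rw [Complex.norm_exp]
  simp

theorem EuclideanSpace.sum_mul_eq_inner {ι : Type*} [Fintype ι] (x y : EuclideanSpace ℝ ι) :
    ∑ i, x i * y i = inner ℝ x y := by
  simp [PiLp.inner_apply, mul_comm]

theorem Real.exp_half_norm_sq_mul_exp_inner_div {E : Type*} [NormedAddCommGroup E]
    [InnerProductSpace ℝ E] (r : ℝ) (u v : E) :
    Real.exp (r / 2 * ‖u‖ ^ 2) * (Real.exp (r * inner ℝ v u) / Real.exp (r / 2 * ‖v‖ ^ 2))
      = Real.exp (r * ‖u‖ ^ 2) * Real.exp (-(r * ‖u - v‖ ^ 2) / 2) := by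
  rw [← Real.exp_sub, ← Real.exp_add, ← Real.exp_add, norm_sub_sq_real, real_inner_comm]
  ring_nf

theorem sum_erase_exp_neg_sq_dist_le {ι E : Type*} [Fintype ι] [DecidableEq ι]
    [SeminormedAddCommGroup E] (s : ι → E) {r δ : ℝ} (hr : 0 ≤ r) (hδ : 0 ≤ δ)
    (hsep : ∀ j l, j ≠ l → δ ≤ ‖s j - s l‖) (j : ι) :
    ∑ l ∈ univ.erase j, Real.exp (-(r * ‖s j - s l‖ ^ 2) / 2)
      ≤ ((Fintype.card ι : ℝ) - 1) * Real.exp (-(r * δ ^ 2) / 2) := by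
  calc ∑ l ∈ univ.erase j, Real.exp (-(r * ‖s j - s l‖ ^ 2) / 2)
      ≤ ∑ l ∈ univ.erase j, Real.exp (-(r * δ ^ 2) / 2) := by
        refine sum_le_sum fun l hl => Real.exp_le_exp.mpr ?_
        have hδl : δ ^ 2 ≤ ‖s j - s l‖ ^ 2 :=
          pow_le_pow_left₀ hδ (hsep j l (ne_of_mem_erase hl).symm) 2
        have := mul_le_mul_of_nonneg_left hδl hr
        linarith
    _ = ((Fintype.card ι : ℝ) - 1) * Real.exp (-(r * δ ^ 2) / 2) := by
        rw [sum_const, card_erase_of_mem (mem_univ j), nsmul_eq_mul, card_univ,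
          Nat.cast_pred (Fintype.card_pos_iff.mpr ⟨j⟩)]

theorem stmt5_general (d m : ℕ)
    (s b : Fin m → EuclideanSpace ℝ (Fin d)) (r δ : ℝ) (hr : 0 < r) (hδ : 0 < δ)
    (hsep : ∀ j l, j ≠ l → δ ≤ ‖s j - s l‖)
    (A : Matrix (Fin m) (Fin m) ℂ)
    (hA : ∀ l j, A l j = Complex.exp
      (((r * ∑ i, s l i * s j i : ℝ) : ℂ) + Complex.I * ((∑ i, b l i * s j i : ℝ) : ℂ)))
    (p : Fin m → ℝ)
    (hp : ∀ j, p j = Real.exp (r / 2 * ‖s j‖ ^ 2)) :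
    ∀ j : Fin m,
      (‖A j j‖ - p j * ∑ l ∈ Finset.univ.erase j, ‖A l j‖ / p l
        = Real.exp (r * ‖s j‖ ^ 2) *
            (1 - ∑ l ∈ Finset.univ.erase j, Real.exp (-(r * ‖s j - s l‖ ^ 2) / 2))) ∧
      (Real.exp (r * ‖s j‖ ^ 2) *
            (1 - ∑ l ∈ Finset.univ.erase j, Real.exp (-(r * ‖s j - s l‖ ^ 2) / 2))
        ≥ Real.exp (r * ‖s j‖ ^ 2) * (1 - ((m : ℝ) - 1) * Real.exp (-(r * δ ^ 2) / 2))) := by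
  intro j
  have hnorm (l : Fin m) : ‖A l j‖ = Real.exp (r * inner ℝ (s l) (s j)) := by
    rw [hA, Complex.norm_exp_ofReal_add_I_mul, EuclideanSpace.sum_mul_eq_inner]
  constructor
  · simp_rw [mul_sum, hnorm, hp, Real.exp_half_norm_sq_mul_exp_inner_div,
      real_inner_self_eq_norm_sq, ← mul_sum]
    ring
  · have := sum_erase_exp_neg_sq_dist_le s hr.le hδ.le hsep j
    rw [Fintype.card_fin] at this
    exact mul_le_mul_of_nonneg_left (by linarith) (Real.exp_nonneg _)

theorem stmt5 (d m : ℕ) (hd : 1 ≤ d) (hm : 1 ≤ m)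
    (s b : Fin m → EuclideanSpace ℝ (Fin d)) (r δ : ℝ) (hr : 0 < r) (hδ : 0 < δ)
    (hsep : ∀ j l, j ≠ l → δ ≤ ‖s j - s l‖)
    (A : Matrix (Fin m) (Fin m) ℂ)
    (hA : ∀ l j, A l j = Complex.exp
      (((r * ∑ i, s l i * s j i : ℝ) : ℂ) + Complex.I * ((∑ i, b l i * s j i : ℝ) : ℂ)))
    (p : Fin m → ℝ)
    (hp : ∀ j, p j = Real.exp (r / 2 * ‖s j‖ ^ 2)) :
    ∀ j : Fin m,
      (‖A j j‖ - p j * ∑ l ∈ Finset.univ.erase j, ‖A l j‖ / p l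
        = Real.exp (r * ‖s j‖ ^ 2) *
            (1 - ∑ l ∈ Finset.univ.erase j, Real.exp (-(r * ‖s j - s l‖ ^ 2) / 2))) ∧
      (Real.exp (r * ‖s j‖ ^ 2) *
            (1 - ∑ l ∈ Finset.univ.erase j, Real.exp (-(r * ‖s j - s l‖ ^ 2) / 2))
        ≥ Real.exp (r * ‖s j‖ ^ 2) * (1 - ((m : ℝ) - 1) * Real.exp (-(r * δ ^ 2) / 2))) :=
  stmt5_general d m s b r δ hr hδ hsep A hA p hp
end

section
/- Let d ≥ 1 and m ≥ 1 be integers, let s_1, …, s_m ∈ ℝ^d be points satisfying |s_j − s_l| ≥ δ for all j ≠ l for some δ > 0, and let r > 0 satisfy (m−1) exp(−r δ²/2) < 1. Then for ANY choice of real vectors b_1, …, b_m ∈ ℝ^d, the m × m complex matrix A with entries a_{l,j} = exp(r s_l·s_j + i b_l·s_j) is invertible. -/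
/-!
Conjugating `A` by the diagonal matrix of Gaussian weights `p_j = exp ((r/2)|s_j|²)` turns
`|a_{l,j}| = exp (r s_l·s_j)` into `exp (r|s_j|²) exp (-(r/2)|s_l - s_j|²)`, by the polarization
identity. Off the diagonal the second factor is at most `exp (-rδ²/2)`, so the smallness assumption
makes the conjugated matrix strictly column diagonally dominant, and Gershgorin's theorem applies.
-/

open Finset Real

theorem det_ne_zero_of_weighted_sum_col_lt_diag {K n : Type*} [NormedField K] [Fintype n]
    [DecidableEq n] {A : Matrix n n K} (p : n → K) (hp : ∀ k, p k ≠ 0)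
    (h : ∀ k, ∑ l ∈ univ.erase k, ‖p k‖ * ‖A l k‖ / ‖p l‖ < ‖A k k‖) : A.det ≠ 0 := by
  set B := Matrix.diagonal (fun l => (p l)⁻¹) * A * Matrix.diagonal p
  have hB : ∀ l k, ‖B l k‖ = ‖p k‖ * ‖A l k‖ / ‖p l‖ := fun l k => by
    simp only [B, Matrix.mul_diagonal, Matrix.diagonal_mul, norm_mul, norm_inv]
    ring
  have hdetB : B.det = A.det := by
    simp only [B, Matrix.det_mul, Matrix.det_diagonal, prod_inv_distrib]
    field_simp [prod_ne_zero_iff.mpr fun k _ => hp k]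
  rw [← hdetB]
  refine det_ne_zero_of_sum_col_lt_diag fun k => ?_
  simpa only [hB, mul_div_cancel_left₀ _ (norm_ne_zero_iff.mpr (hp k))] using h k

theorem sum_exp_neg_sq_dist_lt_one {ι X : Type*} [Fintype ι] [DecidableEq ι] [PseudoMetricSpace X]
    (s : ι → X) {r δ : ℝ} (hr : 0 ≤ r) (hδ : 0 ≤ δ)
    (hsep : ∀ j l, j ≠ l → δ ≤ dist (s j) (s l))
    (hsmall : ((Fintype.card ι : ℝ) - 1) * exp (-(r * δ ^ 2) / 2) < 1) (k : ι) :
    ∑ l ∈ univ.erase k, exp (-(r / 2 * dist (s l) (s k) ^ 2)) < 1 := by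
  have hterm : ∀ l ∈ univ.erase k,
      exp (-(r / 2 * dist (s l) (s k) ^ 2)) ≤ exp (-(r * δ ^ 2) / 2) := fun l hl => by
    have hδsq : δ ^ 2 ≤ dist (s l) (s k) ^ 2 := by
      gcongr
      exact hsep l k (ne_of_mem_erase hl)
    exact exp_le_exp.mpr (by nlinarith)
  calc ∑ l ∈ univ.erase k, exp (-(r / 2 * dist (s l) (s k) ^ 2))
      ≤ ∑ _l ∈ univ.erase k, exp (-(r * δ ^ 2) / 2) := sum_le_sum hterm
    _ = ((Fintype.card ι : ℝ) - 1) * exp (-(r * δ ^ 2) / 2) := by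
      rw [sum_const, card_erase_of_mem (mem_univ k), card_univ, nsmul_eq_mul,
        Nat.cast_sub (Fintype.card_pos_iff.mpr ⟨k⟩), Nat.cast_one]
    _ < 1 := hsmall

theorem exp_half_sq_mul_exp_inner_div {E : Type*} [NormedAddCommGroup E] [InnerProductSpace ℝ E]
    (r : ℝ) (x y : E) :
    exp (r / 2 * ‖y‖ ^ 2) * exp (r * inner ℝ x y) / exp (r / 2 * ‖x‖ ^ 2)
      = exp (r * ‖y‖ ^ 2) * exp (-(r / 2 * ‖x - y‖ ^ 2)) := by
  rw [← exp_add, ← exp_sub, ← exp_add, norm_sub_sq_real]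
  ring_nf

theorem det_ne_zero_of_norm_eq_exp_inner {ι E : Type*} [Fintype ι] [DecidableEq ι]
    [NormedAddCommGroup E] [InnerProductSpace ℝ E] {A : Matrix ι ι ℂ} (s : ι → E) {r δ : ℝ}
    (hr : 0 ≤ r) (hδ : 0 ≤ δ) (hsep : ∀ j l, j ≠ l → δ ≤ ‖s j - s l‖)
    (hsmall : ((Fintype.card ι : ℝ) - 1) * exp (-(r * δ ^ 2) / 2) < 1)
    (hA : ∀ l j, ‖A l j‖ = exp (r * inner ℝ (s l) (s j))) : A.det ≠ 0 := by
  refine det_ne_zero_of_weighted_sum_col_lt_diag (fun k => (exp (r / 2 * ‖s k‖ ^ 2) : ℂ))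
    (fun k => Complex.ofReal_ne_zero.mpr (exp_pos _).ne') fun k => ?_
  have hdom := sum_exp_neg_sq_dist_lt_one s hr hδ (by simpa only [dist_eq_norm] using hsep)
    hsmall k
  simp only [Complex.norm_real, norm_of_nonneg (exp_pos _).le, hA, exp_half_sq_mul_exp_inner_div,
    ← mul_sum, real_inner_self_eq_norm_sq]
  simpa only [dist_eq_norm] using mul_lt_of_lt_one_right (exp_pos _) hdom

theorem stmt6_general (d m : ℕ)
    (s : Fin m → EuclideanSpace ℝ (Fin d)) (r δ : ℝ) (hr : 0 < r) (hδ : 0 < δ)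
    (hsep : ∀ j l, j ≠ l → δ ≤ ‖s j - s l‖)
    (hsmall : ((m : ℝ) - 1) * Real.exp (-(r * δ ^ 2) / 2) < 1) :
    ∀ b : Fin m → EuclideanSpace ℝ (Fin d),
      IsUnit (Matrix.of fun l j : Fin m => Complex.exp
        (((r * ∑ i, s l i * s j i : ℝ) : ℂ) + Complex.I * ((∑ i, b l i * s j i : ℝ) : ℂ))) := by
  intro b
  have hinner : ∀ l j, ∑ i, s l i * s j i = inner ℝ (s l) (s j) := fun l j => by
    simp [PiLp.inner_apply, mul_comm]
  rw [Matrix.isUnit_iff_isUnit_det]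
  refine (det_ne_zero_of_norm_eq_exp_inner s hr.le hδ.le hsep (by simpa using hsmall)
    fun l j => ?_).isUnit
  simp [Complex.norm_exp, hinner]

theorem stmt6 (d m : ℕ) (hd : 1 ≤ d) (hm : 1 ≤ m)
    (s : Fin m → EuclideanSpace ℝ (Fin d)) (r δ : ℝ) (hr : 0 < r) (hδ : 0 < δ)
    (hsep : ∀ j l, j ≠ l → δ ≤ ‖s j - s l‖)
    (hsmall : ((m : ℝ) - 1) * Real.exp (-(r * δ ^ 2) / 2) < 1) :
    ∀ b : Fin m → EuclideanSpace ℝ (Fin d),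
      IsUnit (Matrix.of fun l j : Fin m => Complex.exp
        (((r * ∑ i, s l i * s j i : ℝ) : ℂ) + Complex.I * ((∑ i, b l i * s j i : ℝ) : ℂ))) :=
  stmt6_general d m s r δ hr hδ hsep hsmall
end

section
/- Let d ≥ 2 and m ≥ 1 be integers, let s_1, …, s_m ∈ ℝ^d be pairwise distinct points that are all nonzero, let T* > 0 and let k ∈ ℤ. Then there exist complex vectors ρ_1, …, ρ_m ∈ ℂ^d with ρ_l·ρ_l = 2kπ i / T* for every l, such that the m × m complex matrix A_k with entries (A_k)_{l,j} = exp(ρ_l·s_j) is invertible. -/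
/-!
Choose a unit vector `u` on which the points `s j` have pairwise distinct projections
`a j = ⟪u, s j⟫` and a unit vector `w ⟂ u`, and look for `ρ = p u + q w` with `p² + q² = c`.
The hyperbola `p = (t + c/t)/2`, `q = -i (t - c/t)/2` turns the entries into
`exp (t μ_j + ν_j / t)` with `Re μ_j = a j / 2`; since the `a j` are distinct, these functions
have pairwise different exponential growth as `t → ∞`, hence are linearly independent, and
linearly independent functions can be evaluated at suitable points to give an invertible matrix.
-/

open Filter Topology Finset Function
open scoped InnerProductSpace

theorem Matrix.exists_isUnit_of_linearIndependent {K X ι : Type*} [Field K] [Fintype ι]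
    [DecidableEq ι] {f : ι → X → K} (hf : LinearIndependent K f) :
    ∃ x : ι → X, IsUnit (Matrix.of fun l j => f j (x l)) := by
  let row : X → ι → K := fun x j => f j x
  have hspan : Submodule.span K (Set.range row) = ⊤ := by
    by_contra h
    obtain ⟨φ, hφ, hker⟩ :=
      Submodule.exists_dual_map_eq_bot_of_lt_top (lt_top_iff_ne_top.2 h) inferInstance
    have hφrow (x : X) : φ (row x) = 0 := by
      rw [← Submodule.mem_bot K, ← hker]
      exact Submodule.mem_map_of_mem (Submodule.subset_span ⟨x, rfl⟩)
    have hcoef := Fintype.linearIndependent_iff.1 hf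
      (fun i => φ fun j => if i = j then 1 else 0) <| by
        funext x
        simpa [Finset.sum_apply, LinearMap.pi_apply_eq_sum_univ φ (row x), mul_comm, row]
          using hφrow x
    refine hφ (LinearMap.ext fun v => ?_)
    simp [LinearMap.pi_apply_eq_sum_univ φ v, hcoef]
  obtain ⟨κ, a, -, hspan', hli⟩ := exists_linearIndependent' K row
  let e := (Module.Basis.mk hli (by rw [hspan', hspan])).indexEquiv (Pi.basisFun K ι)
  refine ⟨a ∘ e.symm, ?_⟩
  rw [← Matrix.linearIndependent_rows_iff_isUnit]
  exact hli.comp _ e.symm.injective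

theorem linearIndependent_restrict_of_tendsto_div {𝕜 ι X β : Type*} [NormedField 𝕜] [Fintype ι]
    [LinearOrder β] {l : Filter X} [l.NeBot] {g : ι → X → 𝕜} (hg : ∀ j x, g j x ≠ 0)
    {r : ι → β} (hr : Injective r)
    (hdom : ∀ i j, r i < r j → Tendsto (fun x => g i x / g j x) l (𝓝 0))
    {S : Set X} (hS : S ∈ l) : LinearIndependent 𝕜 (fun j (x : S) => g j x) := by
  classical
  suffices H : ∀ s : Finset ι, ∀ c : ι → 𝕜,
      (∀ᶠ x in l, ∑ j ∈ s, c j * g j x = 0) → ∀ j ∈ s, c j = 0 by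
    refine Fintype.linearIndependent_iff.2 fun c hc j => H univ c ?_ j (mem_univ j)
    filter_upwards [hS] with x hx
    simpa [Finset.sum_apply] using congrFun hc ⟨x, hx⟩
  intro s
  induction s using Finset.induction_on_max_value r with
  | empty => simp
  | insert a s has hmax ih =>
    intro c hc
    have hlim : Tendsto (fun x => ∑ j ∈ insert a s, c j * (g j x / g a x)) l (𝓝 (c a)) := by
      have hlt (j) (hj : j ∈ s) : r j < r a :=
        (hmax j hj).lt_of_ne (hr.ne (ne_of_mem_of_not_mem hj has))
      simp only [sum_insert has, div_self (hg a _), mul_one]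
      simpa using tendsto_const_nhds.add
        (tendsto_finsetSum s fun j hj => (hdom j a (hlt j hj)).const_mul (c j))
    have hca : c a = 0 := by
      refine tendsto_nhds_unique hlim (tendsto_const_nhds.congr' ?_)
      filter_upwards [hc] with x hx
      rw [eq_comm]
      simp only [← mul_div_assoc, ← sum_div, hx, zero_div]
    intro j hj
    rcases mem_insert.1 hj with rfl | hj
    · exact hca
    · refine ih c ?_ j hj
      filter_upwards [hc] with x hx
      simpa [sum_insert has, hca] using hx

theorem tendsto_exp_mul_add_div_atTop {δ : ℂ} (hδ : δ.re < 0) (ε : ℂ) :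
    Tendsto (fun t : ℝ => Complex.exp (t * δ + ε / t)) atTop (𝓝 0) := by
  rw [tendsto_zero_iff_norm_tendsto_zero]
  simp only [Complex.norm_exp, Complex.add_re, Complex.div_ofReal_re]
  refine Real.tendsto_exp_atBot.comp (tendsto_atBot_add_right_of_ge' _ 1 ?_ ?_)
  · simpa [mul_comm] using tendsto_id.atTop_mul_const_of_neg hδ
  · filter_upwards [(tendsto_const_nhds.div_atTop tendsto_id).eventually
      (eventually_le_nhds zero_lt_one)] with t ht using ht

open Complex in
theorem exists_sq_add_sq_eq_and_isUnit_exp {ι : Type*} [Fintype ι] [DecidableEq ι] {a : ι → ℝ}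
    (ha : Injective a) (b : ι → ℝ) (c : ℂ) :
    ∃ p q : ι → ℂ, (∀ l, p l ^ 2 + q l ^ 2 = c) ∧
      IsUnit (Matrix.of fun l j => exp (p l * a j + q l * b j)) := by
  let μ : ι → ℂ := fun j => (a j - I * b j) / 2
  let ν : ι → ℂ := fun j => c * (a j + I * b j) / 2
  have hli : LinearIndependent ℂ fun j (t : Set.Ioi (0 : ℝ)) => exp (t * μ j + ν j / t) := by
    refine linearIndependent_restrict_of_tendsto_div
      (g := fun j (t : ℝ) => exp (t * μ j + ν j / t)) (fun _ _ => exp_ne_zero _) ha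
      (fun i j hij => ?_) (Ioi_mem_atTop 0)
    have hre : (μ i - μ j).re < 0 := by
      simp only [μ, sub_re, div_ofNat_re, ofReal_re, mul_re, I_re, I_im, ofReal_im]
      linarith
    refine (tendsto_exp_mul_add_div_atTop hre (ν i - ν j)).congr fun t => ?_
    rw [← exp_sub]
    ring_nf
  obtain ⟨t, ht⟩ := Matrix.exists_isUnit_of_linearIndependent hli
  have ht0 (l : ι) : ((t l : ℝ) : ℂ) ≠ 0 := ofReal_ne_zero.2 (t l).2.ne'
  refine ⟨fun l => (t l + c / t l) / 2, fun l => -I * (t l - c / t l) / 2, fun l => ?_, ?_⟩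
  · linear_combination (t l - c / t l) ^ 2 / 4 * I_sq + c * mul_inv_cancel₀ (ht0 l)
  · convert ht using 5 with l j
    dsimp only [μ, ν]
    ring

section InnerProductSpace

variable {E : Type*} [NormedAddCommGroup E] [InnerProductSpace ℝ E]

theorem exists_norm_eq_one_injective_inner [Nontrivial E] {ι : Type*} [Finite ι] {s : ι → E}
    (hs : Injective s) : ∃ u : E, ‖u‖ = 1 ∧ Injective fun j => ⟪u, s j⟫_ℝ := by
  -- `u` must avoid the hyperplanes `(s i - s j)ᗮ`; avoiding `⊥` as well makes it nonzero.
  let p : Option {ij : ι × ι // ij.1 ≠ ij.2} → Submodule ℝ E :=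
    fun o => o.elim ⊥ fun ij => (ℝ ∙ (s ij.1.1 - s ij.1.2))ᗮ
  have hp (o) : p o ≠ ⊤ := by
    cases o with
    | none => exact bot_ne_top
    | some ij => simpa [p, Submodule.orthogonal_eq_top_iff, sub_eq_zero] using hs.ne ij.2
  obtain ⟨u, hu⟩ : ∃ u, ∀ o, u ∉ p o := by
    by_contra! h
    obtain ⟨o, ho⟩ := Subspace.exists_eq_top_of_iUnion_eq_univ
      (Set.eq_univ_of_forall fun u => Set.mem_iUnion.2 (h u))
    exact hp o ho
  have hu0 : u ≠ 0 := fun h0 => hu none (by simp [p, h0])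
  refine ⟨‖u‖⁻¹ • u, norm_smul_inv_norm hu0, fun i j hij => by_contra fun hne => ?_⟩
  apply hu (some ⟨(i, j), hne⟩)
  have hij' : ⟪u, s i⟫_ℝ = ⟪u, s j⟫_ℝ := by
    simpa [real_inner_smul_left, hu0] using hij
  simp [p, Submodule.mem_orthogonal_singleton_iff_inner_right, inner_sub_left, real_inner_comm,
    hij']

theorem exists_norm_eq_one_inner_eq_zero [FiniteDimensional ℝ E] (hE : 2 ≤ Module.finrank ℝ E)
    (u : E) : ∃ w : E, ‖w‖ = 1 ∧ ⟪u, w⟫_ℝ = 0 := by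
  have hne : (ℝ ∙ u)ᗮ ≠ ⊥ := by
    rw [Ne, Submodule.orthogonal_eq_bot_iff]
    intro htop
    have := finrank_span_le_card (R := ℝ) ({u} : Set E)
    rw [htop, finrank_top] at this
    simp only [Set.toFinset_singleton, card_singleton] at this
    omega
  obtain ⟨w, hw, hw0⟩ := Submodule.exists_mem_ne_zero_of_ne_bot hne
  refine ⟨‖w‖⁻¹ • w, norm_smul_inv_norm hw0, ?_⟩
  rw [real_inner_smul_right, Submodule.mem_orthogonal_singleton_iff_inner_right.1 hw, mul_zero]

end InnerProductSpace

theorem EuclideanSpace.sum_mul_add_mul_ofReal {ι : Type*} [Fintype ι] (p q : ℂ)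
    (u w z : EuclideanSpace ℝ ι) :
    ∑ i, (p * u i + q * w i) * z i = p * ⟪u, z⟫_ℝ + q * ⟪w, z⟫_ℝ := by
  simp only [PiLp.inner_apply, RCLike.inner_apply, conj_trivial, Complex.ofReal_sum,
    Complex.ofReal_mul, mul_sum, ← sum_add_distrib]
  exact sum_congr rfl fun i _ => by ring

theorem stmt7_general (d m : ℕ) (hd : 2 ≤ d)
    (s : Fin m → EuclideanSpace ℝ (Fin d))
    (hdist : Function.Injective s)
    (T : ℝ) (k : ℤ) :
    ∃ ρ : Fin m → (Fin d → ℂ),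
      (∀ l, ∑ i, ρ l i ^ 2 = 2 * (k : ℂ) * (Real.pi : ℂ) * Complex.I / (T : ℂ)) ∧
      IsUnit (Matrix.of fun l j : Fin m =>
        Complex.exp (∑ i, ρ l i * (s j i : ℂ))) := by
  have hE : 2 ≤ Module.finrank ℝ (EuclideanSpace ℝ (Fin d)) := by simpa using hd
  have : Nontrivial (EuclideanSpace ℝ (Fin d)) :=
    Module.nontrivial_of_finrank_pos (R := ℝ) (by omega)
  obtain ⟨u, hu, hinj⟩ := exists_norm_eq_one_injective_inner hdist
  obtain ⟨w, hw, huw⟩ := exists_norm_eq_one_inner_eq_zero hE u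
  obtain ⟨p, q, hpq, hunit⟩ := exists_sq_add_sq_eq_and_isUnit_exp hinj (fun j => ⟪w, s j⟫_ℝ)
    (2 * k * Real.pi * Complex.I / T)
  refine ⟨fun l i => p l * u i + q l * w i, fun l => ?_, ?_⟩
  · calc ∑ i, (p l * u i + q l * w i) ^ 2
        = p l * ∑ i, (p l * u i + q l * w i) * u i + q l * ∑ i, (p l * u i + q l * w i) * w i := by
          simp only [mul_sum, ← sum_add_distrib]
          exact sum_congr rfl fun i _ => by ring
      _ = p l ^ 2 + q l ^ 2 := by
          simp only [EuclideanSpace.sum_mul_add_mul_ofReal, real_inner_self_eq_norm_sq, hu, hw,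
            huw, real_inner_comm u w]
          push_cast
          ring
      _ = _ := hpq l
  · simpa only [EuclideanSpace.sum_mul_add_mul_ofReal] using hunit

theorem stmt7 (d m : ℕ) (hd : 2 ≤ d) (hm : 1 ≤ m)
    (s : Fin m → EuclideanSpace ℝ (Fin d))
    (hdist : Function.Injective s) (hnz : ∀ j, s j ≠ 0)
    (T : ℝ) (hT : 0 < T) (k : ℤ) :
    ∃ ρ : Fin m → (Fin d → ℂ),
      (∀ l, ∑ i, ρ l i ^ 2 = 2 * (k : ℂ) * (Real.pi : ℂ) * Complex.I / (T : ℂ)) ∧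
      IsUnit (Matrix.of fun l j : Fin m =>
        Complex.exp (∑ i, ρ l i * (s j i : ℂ))) :=
  stmt7_general d m hd s hdist T k
end

section
/- Let m ≥ 1, let s_1, …, s_m ∈ ℝ² be points satisfying |s_j − s_l| ≥ δ for all j ≠ l for some δ > 0, and let r > 0 satisfy C := 1 − (m−1) exp(−r δ²/2) > 0. Let J : ℝ² → ℝ² be the rotation J(x₁, x₂) = (x₂, −x₁), set ρ_l = r s_l + i r J(s_l) ∈ ℂ², and let A₀ be the m × m complex matrix with entries exp(ρ_l·s_j). Then A₀ is invertible, and for all vectors Λ, Λ̂ ∈ ℂ^m one has the stability estimate ‖Λ − Λ̂‖₂ ≤ (1/C) ‖A₀Λ − A₀Λ̂‖₂, where ‖·‖₂ is the Euclidean norm on ℂ^m. -/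
/-!
Put `d l = exp (r ‖s l‖² / 2)`. Since `|A₀ l j| = exp (r ⟪s l, s j⟫)` and `A₀ l l = d l ²`, the
identity `‖s l - s j‖² = ‖s l‖² - 2 ⟪s l, s j⟫ + ‖s j‖²` shows that `D⁻¹ A₀ D⁻¹` has unit diagonal
and off-diagonal entries of modulus at most `exp (-r δ² / 2)`. Bounding the off-diagonal part of the
quadratic form by Cauchy–Schwarz gives `Re ⟪w, A₀ w⟫ ≥ C ∑ d l² |w l|² ≥ C ‖w‖²`, hence
`C ‖w‖ ≤ ‖A₀ w‖`, which yields both the invertibility and the stability estimate.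
-/

open Matrix Finset Real
open scoped InnerProductSpace

theorem Matrix.mul_sum_sq_le_re_mulVec_dotProduct_star {ι : Type*} [Fintype ι]
    (A : Matrix ι ι ℂ) {d : ι → ℝ} {ε : ℝ} (hε : 0 ≤ ε) (hdiag : ∀ l, d l ^ 2 ≤ (A l l).re)
    (hoff : ∀ l j, l ≠ j → ‖A l j‖ ≤ ε * (d l * d j)) (w : ι → ℂ) :
    (1 - ((Fintype.card ι : ℝ) - 1) * ε) * ∑ l, (d l * ‖w l‖) ^ 2 ≤ ((A *ᵥ w) ⬝ᵥ star w).re := by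
  classical
  obtain ⟨x, hx⟩ : ∃ x : ι → ℝ, ∀ l, x l = d l * ‖w l‖ := ⟨_, fun _ => rfl⟩
  -- Adding `ε * x l ^ 2` on the diagonal makes the lower bounds sum to `(1 + ε) ∑ x² - ε (∑ x)²`.
  have hterm : ∀ l j,
      (if l = j then (1 + ε) * x l ^ 2 else 0) - ε * (x l * x j)
        ≤ (A l j * w j * star (w l)).re := by
    intro l j
    split_ifs with hlj
    · rw [← hlj, mul_assoc, Complex.star_def, Complex.mul_conj, Complex.re_mul_ofReal,
        Complex.normSq_eq_norm_sq, hx]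
      nlinarith [mul_le_mul_of_nonneg_right (hdiag l) (sq_nonneg ‖w l‖)]
    · refine le_trans ?_ (neg_le_of_abs_le (Complex.abs_re_le_norm _))
      rw [zero_sub, neg_le_neg_iff, norm_mul, norm_mul, Complex.star_def, Complex.norm_conj,
        hx, hx]
      calc ‖A l j‖ * ‖w j‖ * ‖w l‖ ≤ ε * (d l * d j) * ‖w j‖ * ‖w l‖ := by
            gcongr
            exact hoff l j hlj
        _ = ε * (d l * ‖w l‖ * (d j * ‖w j‖)) := by ring
  have hcs := sq_sum_le_card_mul_sum_sq (s := univ) (f := x)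
  rw [card_univ] at hcs
  simp only [← hx]
  calc (1 - ((Fintype.card ι : ℝ) - 1) * ε) * ∑ l, x l ^ 2
      ≤ (1 + ε) * ∑ l, x l ^ 2 - ε * (∑ l, x l) ^ 2 := by nlinarith
    _ = ∑ l, ∑ j, ((if l = j then (1 + ε) * x l ^ 2 else 0) - ε * (x l * x j)) := by
        rw [sq (∑ l, x l), Finset.sum_mul_sum, Finset.mul_sum, Finset.mul_sum]
        simp only [Finset.sum_sub_distrib, Finset.sum_ite_eq, mem_univ, if_true, Finset.mul_sum]
    _ ≤ ∑ l, ∑ j, (A l j * w j * star (w l)).re := by gcongr with l _ j _; exact hterm l j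
    _ = ((A *ᵥ w) ⬝ᵥ star w).re := by
        simp only [dotProduct, mulVec, Finset.sum_mul, Complex.re_sum, Pi.star_apply]

theorem exp_mul_inner_le {E : Type*} [NormedAddCommGroup E] [InnerProductSpace ℝ E] {r δ : ℝ}
    (hr : 0 ≤ r) (hδ : 0 ≤ δ) {a b : E} (hab : δ ≤ ‖a - b‖) :
    exp (r * ⟪a, b⟫_ℝ)
      ≤ exp (-(r * δ ^ 2) / 2) * (exp (r * ‖a‖ ^ 2 / 2) * exp (r * ‖b‖ ^ 2 / 2)) := by
  rw [← exp_add, ← exp_add, exp_le_exp]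
  have hsq : δ ^ 2 ≤ ‖a‖ ^ 2 - 2 * ⟪a, b⟫_ℝ + ‖b‖ ^ 2 :=
    norm_sub_sq_real a b ▸ pow_le_pow_left₀ hδ hab 2
  nlinarith

theorem mul_norm_le_norm_of_mul_sq_le_re_inner {𝕜 E : Type*} [RCLike 𝕜] [NormedAddCommGroup E]
    [InnerProductSpace 𝕜 E] {c : ℝ} {x y : E} (h : c * ‖x‖ ^ 2 ≤ RCLike.re ⟪x, y⟫_𝕜) :
    c * ‖x‖ ≤ ‖y‖ := by
  rcases (norm_nonneg x).eq_or_lt with hx | hx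
  · rw [← hx, mul_zero]
    exact norm_nonneg y
  · refine le_of_mul_le_mul_left ?_ hx
    nlinarith [re_inner_le_norm (𝕜 := 𝕜) x y]

theorem Matrix.mul_norm_sq_le_re_inner_mulVec_of_norm_eq_exp_inner {ι E : Type*} [Fintype ι]
    [NormedAddCommGroup E] [InnerProductSpace ℝ E] (A : Matrix ι ι ℂ) (s : ι → E) {r δ : ℝ}
    (hr : 0 ≤ r) (hδ : 0 ≤ δ) (hsep : ∀ j l, j ≠ l → δ ≤ ‖s j - s l‖)
    (hnorm : ∀ l j, ‖A l j‖ = exp (r * ⟪s l, s j⟫_ℝ))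
    (hdiag : ∀ l, (A l l).re = exp (r * ‖s l‖ ^ 2))
    (hC : 0 ≤ 1 - ((Fintype.card ι : ℝ) - 1) * exp (-(r * δ ^ 2) / 2)) (w : ι → ℂ) :
    (1 - ((Fintype.card ι : ℝ) - 1) * exp (-(r * δ ^ 2) / 2)) * ‖WithLp.toLp 2 w‖ ^ 2
      ≤ RCLike.re ⟪WithLp.toLp 2 w, WithLp.toLp 2 (A *ᵥ w)⟫_ℂ := by
  have hdom := A.mul_sum_sq_le_re_mulVec_dotProduct_star (d := fun l => exp (r * ‖s l‖ ^ 2 / 2))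
    (exp_pos _).le (fun l => by rw [hdiag, sq, ← exp_add, add_halves])
    (fun l j hlj => hnorm l j ▸ exp_mul_inner_le hr hδ (hsep l j hlj)) w
  calc _ = (1 - ((Fintype.card ι : ℝ) - 1) * exp (-(r * δ ^ 2) / 2)) * ∑ l, ‖w l‖ ^ 2 := by
        rw [EuclideanSpace.norm_sq_eq]
    _ ≤ (1 - ((Fintype.card ι : ℝ) - 1) * exp (-(r * δ ^ 2) / 2)) *
          ∑ l, (exp (r * ‖s l‖ ^ 2 / 2) * ‖w l‖) ^ 2 := by
        gcongr with l
        exact le_mul_of_one_le_left (norm_nonneg _) (one_le_exp (by positivity))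
    _ ≤ _ := hdom

theorem Matrix.isUnit_of_mul_norm_le_norm_mulVec {ι 𝕜 : Type*} [Fintype ι] [DecidableEq ι]
    [RCLike 𝕜] (A : Matrix ι ι 𝕜) {c : ℝ} (hc : 0 < c)
    (h : ∀ w, c * ‖WithLp.toLp 2 w‖ ≤ ‖WithLp.toLp 2 (A *ᵥ w)‖) : IsUnit A := by
  refine mulVec_injective_iff_isUnit.mp fun x y hxy => ?_
  have hle := h (x - y)
  rw [mulVec_sub, hxy, sub_self, WithLp.toLp_zero, norm_zero] at hle
  have hzero : ‖WithLp.toLp 2 (x - y)‖ = 0 := le_antisymm (by nlinarith) (norm_nonneg _)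
  simpa [sub_eq_zero] using hzero

theorem sum_rotation_mul_eq (r : ℝ) (a b : EuclideanSpace ℝ (Fin 2)) :
    ∑ i, (((r * a i : ℝ) : ℂ) + Complex.I * ((r * ![a 1, -a 0] i : ℝ) : ℂ)) * (b i : ℂ) =
      ((r * ⟪a, b⟫_ℝ : ℝ) : ℂ) + Complex.I * ((r * (a 1 * b 0 - a 0 * b 1) : ℝ) : ℂ) := by
  simp only [PiLp.inner_apply, RCLike.inner_apply, conj_trivial, Fin.sum_univ_two,
    Matrix.cons_val_zero, Matrix.cons_val_one]
  push_cast
  ring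

theorem stmt9_general (m : ℕ) (s : Fin m → EuclideanSpace ℝ (Fin 2))
    (δ r : ℝ) (hδ : 0 < δ) (hr : 0 < r)
    (hsep : ∀ j l, j ≠ l → δ ≤ ‖s j - s l‖)
    (C : ℝ) (hC : C = 1 - ((m : ℝ) - 1) * Real.exp (-(r * δ ^ 2) / 2)) (hCpos : 0 < C)
    (J : (Fin 2 → ℝ) → (Fin 2 → ℝ)) (hJ : J = fun x => ![x 1, -x 0])
    (ρ : Fin m → (Fin 2 → ℂ))
    (hρ : ∀ l, ρ l = fun i => (r * s l i : ℝ) + Complex.I * ((r * J (s l) i : ℝ) : ℂ))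
    (A₀ : Matrix (Fin m) (Fin m) ℂ)
    (hA : ∀ l j, A₀ l j = Complex.exp (∑ i, ρ l i * (s j i : ℂ))) :
    IsUnit A₀ ∧
    ∀ Λ Λ' : Fin m → ℂ,
      ‖(EuclideanSpace.equiv (Fin m) ℂ).symm (Λ - Λ')‖
        ≤ (1 / C) * ‖(EuclideanSpace.equiv (Fin m) ℂ).symm (A₀.mulVec Λ - A₀.mulVec Λ')‖ := by
  have hentry : ∀ l j, A₀ l j = Complex.exp (((r * ⟪s l, s j⟫_ℝ : ℝ) : ℂ) +
      Complex.I * ((r * (s l 1 * s j 0 - s l 0 * s j 1) : ℝ) : ℂ)) := fun l j => by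
    simp only [hA, hρ, hJ, sum_rotation_mul_eq]
  have hnorm : ∀ l j, ‖A₀ l j‖ = exp (r * ⟪s l, s j⟫_ℝ) := fun l j => by
    simp [hentry, Complex.norm_exp]
  have hdiag : ∀ l, (A₀ l l).re = exp (r * ‖s l‖ ^ 2) := fun l => by
    rw [hentry, show r * (s l 1 * s l 0 - s l 0 * s l 1) = 0 by ring, Complex.ofReal_zero,
      mul_zero, add_zero, ← Complex.ofReal_exp, Complex.ofReal_re, real_inner_self_eq_norm_sq]
  have hcoercive := A₀.mul_norm_sq_le_re_inner_mulVec_of_norm_eq_exp_inner s hr.le hδ.le hsep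
    hnorm hdiag
  simp only [Fintype.card_fin, ← hC] at hcoercive
  have hbound : ∀ w, C * ‖WithLp.toLp 2 w‖ ≤ ‖WithLp.toLp 2 (A₀ *ᵥ w)‖ := fun w =>
    mul_norm_le_norm_of_mul_sq_le_re_inner (hcoercive hCpos.le w)
  refine ⟨A₀.isUnit_of_mul_norm_le_norm_mulVec hCpos hbound, fun Λ Λ' => ?_⟩
  rw [← mulVec_sub, one_div, inv_mul_eq_div, le_div_iff₀ hCpos, mul_comm]
  exact hbound (Λ - Λ')

theorem stmt9 (m : ℕ) (hm : 1 ≤ m) (s : Fin m → EuclideanSpace ℝ (Fin 2))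
    (δ r : ℝ) (hδ : 0 < δ) (hr : 0 < r)
    (hsep : ∀ j l, j ≠ l → δ ≤ ‖s j - s l‖)
    (C : ℝ) (hC : C = 1 - ((m : ℝ) - 1) * Real.exp (-(r * δ ^ 2) / 2)) (hCpos : 0 < C)
    (J : (Fin 2 → ℝ) → (Fin 2 → ℝ)) (hJ : J = fun x => ![x 1, -x 0])
    (ρ : Fin m → (Fin 2 → ℂ))
    (hρ : ∀ l, ρ l = fun i => (r * s l i : ℝ) + Complex.I * ((r * J (s l) i : ℝ) : ℂ))
    (A₀ : Matrix (Fin m) (Fin m) ℂ)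
    (hA : ∀ l j, A₀ l j = Complex.exp (∑ i, ρ l i * (s j i : ℂ))) :
    IsUnit A₀ ∧
    ∀ Λ Λ' : Fin m → ℂ,
      ‖(EuclideanSpace.equiv (Fin m) ℂ).symm (Λ - Λ')‖
        ≤ (1 / C) * ‖(EuclideanSpace.equiv (Fin m) ℂ).symm (A₀.mulVec Λ - A₀.mulVec Λ')‖ :=
  stmt9_general m s δ r hδ hr hsep C hC hCpos J hJ ρ hρ A₀ hA
end
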